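/- arXiv:1905.03409 — 2 statements merged into one kernel-verified Lean document; each statement's English description precedes it below -/
import Mathlib

section
/- Let K be a compact Hausdorff space, A a star-subalgebra of C(K, ℂ) containing constants, and K₀ ⊆ K. Suppose A separates any two distinct points x, y of K unless both x and y lie in K₀. Then every f ∈ C(K, ℂ) that vanishes identically on K₀ belongs to the uniform closure of A. -/
set_option maxHeartbeats 1000000
set_option synthInstance.maxHeartbeats 400000


theorem stmt_7 {K : Type*} [TopologicalSpace K] [CompactSpace K] [T2Space K]
    (A : StarSubalgebra ℂ C(K, ℂ)) (K₀ : Set K)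
    (hsep : ∀ x y : K, x ≠ y → (x ∉ K₀ ∨ y ∉ K₀) → ∃ h ∈ A, h x ≠ h y)
    (f : C(K, ℂ)) (hf : ∀ x ∈ K₀, f x = 0)
    (hg : ∃ g ∈ A, ∀ x ∈ K₀, g x = 0) :
    f ∈ closure (A : Set C(K, ℂ)) := by
  classical
  -- the evaluation map into the product over elements of A
  let e : K → (A → ℂ) := fun x h => (h : C(K, ℂ)) x
  have he : Continuous e := continuous_pi fun h => (h : C(K, ℂ)).continuous
  -- key: f is constant on fibers of e
  have hkey : ∀ x y : K, e x = e y → f x = f y := by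
    intro x y hxy
    by_cases hxy' : x = y
    · rw [hxy']
    · -- all elements of A agree at x and y, so both x, y ∈ K₀
      have hA : ∀ h ∈ A, h x = h y := by
        intro h hh
        exact congrFun hxy ⟨h, hh⟩
      have hx : x ∈ K₀ ∧ y ∈ K₀ := by
        by_contra hc
        rw [not_and_or] at hc
        obtain ⟨h, hh, hne⟩ := hsep x y hxy' hc
        exact hne (hA h hh)
      rw [hf x hx.1, hf y hx.2]
  -- the quotient space Q = range e
  let Q : Set (A → ℂ) := Set.range e
  haveI : CompactSpace Q := isCompact_iff_compactSpace.mp (isCompact_range he)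
  let e' : C(K, Q) := ⟨fun x => ⟨e x, Set.mem_range_self x⟩, he.subtype_mk _⟩
  have hsurj : Function.Surjective e' := by
    rintro ⟨q, x, rfl⟩; exact ⟨x, rfl⟩
  have hquot : Topology.IsQuotientMap e' :=
    (e'.continuous.isClosedMap).isQuotientMap e'.continuous hsurj
  -- descend f to Q
  let fbar : Q → ℂ := fun q => f (Classical.choose q.2)
  have hfbar : ∀ x : K, fbar (e' x) = f x := by
    intro x
    exact hkey _ _ (Classical.choose_spec (e' x).2)
  have hfbarc : Continuous fbar := by
    rw [hquot.continuous_iff]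
    have : fbar ∘ e' = f := funext hfbar
    rw [this]; exact f.continuous
  let F : C(Q, ℂ) := ⟨fbar, hfbarc⟩
  -- the pullback star algebra hom
  let Φ : C(Q, ℂ) →⋆ₐ[ℂ] C(K, ℂ) := ContinuousMap.compStarAlgHom' ℂ ℂ e'
  have hΦcont : Continuous Φ := ContinuousMap.continuous_precomp (e' : C(K, Q))
  let B : StarSubalgebra ℂ C(Q, ℂ) := A.comap Φ
  -- B separates points of Q
  have hBsep : B.SeparatesPoints := by
    intro q₁ q₂ hne
    have : q₁.1 ≠ q₂.1 := fun h => hne (Subtype.ext h)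
    obtain ⟨h, hh⟩ := Function.ne_iff.mp this
    refine ⟨_, ⟨⟨fun q => q.1 h, (continuous_apply h).comp continuous_subtype_val⟩, ?_, rfl⟩, hh⟩
    show Φ _ ∈ A
    have : Φ (⟨fun q => q.1 h, (continuous_apply h).comp continuous_subtype_val⟩ : C(Q, ℂ))
        = (h : C(K, ℂ)) := by
      ext x; rfl
    rw [this]
    exact h.2
  have hB : B.topologicalClosure = ⊤ :=
    ContinuousMap.starSubalgebra_topologicalClosure_eq_top_of_separatesPoints B hBsep
  have hF : F ∈ closure (B : Set C(Q, ℂ)) := by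
    have : F ∈ B.topologicalClosure := hB ▸ trivial
    exact this
  have hmaps : Set.MapsTo Φ (B : Set C(Q, ℂ)) (A : Set C(K, ℂ)) := fun g hg' => hg'
  have : Φ F ∈ closure (A : Set C(K, ℂ)) := map_mem_closure hΦcont hF hmaps
  have hΦF : Φ F = f := by
    ext x
    exact hfbar x
  rwa [hΦF] at this
end

section
/- Let K be a compact Hausdorff space with at least two points, K₀ ⊆ K, and A a star-subalgebra of C(K, ℂ) containing the constants such that: (i) A separates the points of K \ K₀ and separates any point of K₀ from any point of K \ K₀; (ii) for every f ∈ C(K, ℂ) and every pair x, y ∈ K₀ there is a sequence (f_n) ⊆ A with f_n(x) → f(x) and f_n(y) → f(y). Then A is dense in C(K, ℂ). -/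
open Filter Topology

theorem stmt_16 {K : Type*} [TopologicalSpace K] [CompactSpace K] [T2Space K]
    (hK : ∃ x y : K, x ≠ y)
    (A : StarSubalgebra ℂ C(K, ℂ)) (K₀ : Set K)
    (hsep₁ : ∀ x ∉ K₀, ∀ y ∉ K₀, x ≠ y → ∃ h ∈ A, h x ≠ h y)
    (hsep₂ : ∀ x ∈ K₀, ∀ y ∉ K₀, ∃ h ∈ A, h x ≠ h y)
    (happrox : ∀ f : C(K, ℂ), ∀ x ∈ K₀, ∀ y ∈ K₀,
      ∃ u : ℕ → C(K, ℂ), (∀ n, u n ∈ A) ∧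
        Tendsto (fun n => u n x) atTop (𝓝 (f x)) ∧
        Tendsto (fun n => u n y) atTop (𝓝 (f y))) :
    Dense (A : Set C(K, ℂ)) := by
  have hA : (A.toSubalgebra).SeparatesPoints := by
    rintro x y hxy
    by_cases hx : x ∈ K₀ <;> by_cases hy : y ∈ K₀
    · -- both in K₀: find a continuous function separating them, then approximate
      obtain ⟨g, hg0, hg1, -⟩ := exists_continuous_zero_one_of_isClosed
        (isClosed_singleton (x := x)) (isClosed_singleton (x := y))
        (by simp [Set.disjoint_singleton, hxy])
      set f : C(K, ℂ) := ⟨fun z => (g z : ℂ), by continuity⟩ with hf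
      have hfx : f x = 0 := by simp [hf, hg0 rfl]
      have hfy : f y = 1 := by simp [hf, hg1 rfl]
      obtain ⟨u, hu, hux, huy⟩ := happrox f x hx y hy
      have : ∀ᶠ n in atTop, dist (u n x) (f x) < 1/2 ∧ dist (u n y) (f y) < 1/2 := by
        filter_upwards [Metric.tendsto_nhds.mp hux (1/2) (by norm_num),
          Metric.tendsto_nhds.mp huy (1/2) (by norm_num)] with n h1 h2
        exact ⟨h1, h2⟩
      obtain ⟨n, h1, h2⟩ := this.exists
      refine ⟨_, ⟨u n, hu n, rfl⟩, ?_⟩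
      intro h
      rw [hfx] at h1; rw [hfy] at h2
      have : dist (0 : ℂ) 1 < 1 := by
        calc dist (0:ℂ) 1 ≤ dist (0:ℂ) (u n x) + dist (u n x) 1 := dist_triangle _ _ _
        _ = dist (u n x) 0 + dist (u n y) 1 := by rw [dist_comm, show (u n x : ℂ) = u n y from h]
        _ < 1/2 + 1/2 := add_lt_add h1 h2
        _ = 1 := by norm_num
      simp [dist_eq_norm] at this
    · obtain ⟨h, hA, hne⟩ := hsep₂ x hx y hy
      exact ⟨_, ⟨h, hA, rfl⟩, hne⟩
    · obtain ⟨h, hA, hne⟩ := hsep₂ y hy x hx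
      exact ⟨_, ⟨h, hA, rfl⟩, hne.symm⟩
    · obtain ⟨h, hA, hne⟩ := hsep₁ x hx y hy hxy
      exact ⟨_, ⟨h, hA, rfl⟩, hne⟩
  have := ContinuousMap.starSubalgebra_topologicalClosure_eq_top_of_separatesPoints A hA
  rw [dense_iff_closure_eq, ← StarSubalgebra.topologicalClosure_coe, this,
    StarSubalgebra.coe_top]
end
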